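/- arXiv:1910.02206 — 2 statements merged into one kernel-verified Lean document; each statement's English description precedes it below -/
import Mathlib

section
/- Let (M, d) be a metric space, X : ℕ → M a sequence in M, w : Fin k → ℝ weights with w i > 0 and ∑ᵢ w i = 1, and d' ≥ 1 a dilation factor. Define the dilated convolution (X ⋆ w) : ℕ → M by letting (X ⋆ w)(s) be the unique minimizer of p ↦ ∑_{i=0}^{k-1} w i · (d(X(s − i·d'), p))², assuming for every s that this minimizer exists and is unique, both for X and for g ∘ X. Then for every surjective isometry g : M → M and every s, ((g ∘ X) ⋆ w)(s) = g ((X ⋆ w)(s)). -/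
/-- (Proposition 1) The dilated convolution `(X ⋆ w)(s)`, defined as the
unique minimizer of the weighted Fréchet functional of the dilated window
`X (s - i·d')`, is equivariant under surjective isometries:
`((g ∘ X) ⋆ w)(s) = g ((X ⋆ w)(s))`. Here `Y` plays the role of `X ⋆ w` and
`Z` of `(g ∘ X) ⋆ w`, each assumed to be the unique minimizer at every `s`. -/
theorem dilatedConv_equivariant_isometry {M : Type*} [MetricSpace M] {k : ℕ}
    (X : ℕ → M) (w : Fin k → ℝ)
    (hw : ∀ i, 0 < w i) (hsum : ∑ i, w i = 1)
    (d' : ℕ) (hd' : 1 ≤ d')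
    (g : M → M) (hg : Isometry g) (hsurj : Function.Surjective g)
    (Y Z : ℕ → M)
    (hY : ∀ s : ℕ,
      (∀ p : M, ∑ i, w i * (dist (X (s - (i : ℕ) * d')) (Y s)) ^ 2 ≤
                ∑ i, w i * (dist (X (s - (i : ℕ) * d')) p) ^ 2) ∧
      (∀ m : M,
        (∀ p : M, ∑ i, w i * (dist (X (s - (i : ℕ) * d')) m) ^ 2 ≤
                  ∑ i, w i * (dist (X (s - (i : ℕ) * d')) p) ^ 2) → m = Y s))
    (hZ : ∀ s : ℕ,
      (∀ p : M, ∑ i, w i * (dist (g (X (s - (i : ℕ) * d'))) (Z s)) ^ 2 ≤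
                ∑ i, w i * (dist (g (X (s - (i : ℕ) * d'))) p) ^ 2) ∧
      (∀ m : M,
        (∀ p : M, ∑ i, w i * (dist (g (X (s - (i : ℕ) * d'))) m) ^ 2 ≤
                  ∑ i, w i * (dist (g (X (s - (i : ℕ) * d'))) p) ^ 2) → m = Z s)) :
    ∀ s : ℕ, Z s = g (Y s) := by
  intro s
  symm; apply (hZ s).2
  intro p
  obtain ⟨q, rfl⟩ := hsurj p
  have key : ∀ a b : M, dist (g a) (g b) = dist a b := fun a b => hg.dist_eq a b
  simp only [key]
  exact (hY s).1 q
end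

section
/- Let (M, d) be a metric space, let x₁, …, x_c be points of M, and let w : Fin c → ℝ be weights with w i > 0 and ∑ᵢ w i = 1. Assume that for every family of points the weighted Fréchet functional has a unique minimizer; denote by μ the unique minimizer of p ↦ ∑ᵢ w i · (d(xᵢ, p))² and, for a surjective isometry g : M → M, by μ' the unique minimizer of p ↦ ∑ᵢ w i · (d(g xᵢ, p))². Then for every index i, d(g xᵢ, μ') = d(xᵢ, μ). In particular, the feature matrix d_{ij} = d(xᵢ, μ_j) computed from any collection of such weighted Fréchet means μ₁, …, μ_{nC} is invariant under the action of the isometry group. -/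
/-- (Proposition 2) Let `μ` be the unique minimizer of the weighted
Fréchet functional of points `x i`, and `μ'` the unique minimizer of the functional
of the transformed points `g (x i)` for a surjective isometry `g`. Then
`d(g xᵢ, μ') = d(xᵢ, μ)` for all `i`: the distance features of the invariant last
layer are invariant under the isometry group. -/
theorem lastLayer_invariant_isometry {M : Type*} [MetricSpace M] {c : ℕ}
    (x : Fin c → M) (w : Fin c → ℝ)
    (hw : ∀ i, 0 < w i) (hsum : ∑ i, w i = 1)
    (g : M → M) (hg : Isometry g) (hsurj : Function.Surjective g)
    (μ μ' : M)
    (hμmin : ∀ p : M, ∑ i, w i * (dist (x i) μ) ^ 2 ≤ ∑ i, w i * (dist (x i) p) ^ 2)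
    (hμuniq : ∀ m : M,
      (∀ p : M, ∑ i, w i * (dist (x i) m) ^ 2 ≤ ∑ i, w i * (dist (x i) p) ^ 2) → m = μ)
    (hμ'min : ∀ p : M, ∑ i, w i * (dist (g (x i)) μ') ^ 2 ≤ ∑ i, w i * (dist (g (x i)) p) ^ 2)
    (hμ'uniq : ∀ m : M,
      (∀ p : M, ∑ i, w i * (dist (g (x i)) m) ^ 2 ≤ ∑ i, w i * (dist (g (x i)) p) ^ 2) →
      m = μ') :
    ∀ i : Fin c, dist (g (x i)) μ' = dist (x i) μ := by
  have hgμ : g μ = μ' := by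
    apply hμ'uniq
    intro p
    obtain ⟨q, rfl⟩ := hsurj p
    simp only [hg.dist_eq]
    exact hμmin q
  intro i
  rw [← hgμ, hg.dist_eq]
end
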